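/- arXiv:1908.09103 — 2 statements merged into one kernel-verified Lean document; each statement's English description precedes it below -/
import Mathlib

section
/- (Polytope form of Lemma 2, Case 2.) Let d ≥ 1 and k ≥ d, and let z¹,…,z^k ∈ ℝ^d be such that every subfamily of at most d of the z^r is linearly independent. Let σ₁,…,σ_{2k} > 0 and b₁,…,b_{2k} ∈ ℝ satisfy −σ_r b_r < σ_{k+r} b_{k+r} for every r = 1,…,k (a nondegenerate interval for each z^r·θ). Define D_r = −z^r/σ_r and D_{k+r} = z^r/σ_{k+r} for r = 1,…,k. Let Θ ⊂ ℝ^d be compact and convex with nonempty interior, let Θ_I = {θ ∈ Θ : D_j·θ ≤ b_j for j = 1,…,2k}, and assume Θ_I is nonempty and contained in the interior of Θ. Fix p ∈ ℝ^d, p ≠ 0, let S(p,Θ_I) be the set of maximizers of θ ↦ p·θ over Θ_I, and for θ ∈ Θ_I let J*(θ) = {j : D_j·θ = b_j}. If S(p,Θ_I) is not a singleton, then for every θ* in the relative interior of S(p,Θ_I): the cardinality of J*(θ*) is strictly less than d; the family {D_j : j ∈ J*(θ*)} is linearly independent (LICQ); and there exists t ∈ ℝ^d with D_j·t < 0 for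 all j ∈ J*(θ*) (MFCQ). -/
open Metric RealInnerProductSpace

noncomputable section

/-- For a linearly independent family in a finite-dimensional real inner product space,
there is a vector whose inner product with every member of the family is negative. -/
theorem exists_inner_neg_aux {E : Type*} [NormedAddCommGroup E] [InnerProductSpace ℝ E]
    [FiniteDimensional ℝ E] {ι : Type*} (v : ι → E)
    (hv : LinearIndependent ℝ v) : ∃ t : E, ∀ i, ⟪v i, t⟫ < 0 := by
  classical
  have hs := (linearIndepOn_id_range_iff hv.injective).mpr hv
  let B := Module.Basis.extend hs
  let f : E →ₗ[ℝ] ℝ :=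
    B.constr ℝ (fun x => if (x : E) ∈ Set.range v then (-1:ℝ) else 0)
  have hf : ∀ i, f (v i) = -1 := by
    intro i
    have hmem : v i ∈ hs.extend (Set.subset_univ _) := hs.subset_extend _ ⟨i, rfl⟩
    have hvB : v i = B ⟨v i, hmem⟩ := (Module.Basis.extend_apply_self hs ⟨v i, hmem⟩).symm
    rw [hvB, Module.Basis.constr_basis]
    simp
  refine ⟨(InnerProductSpace.toDual ℝ E).symm (LinearMap.toContinuousLinearMap f),
    fun i => ?_⟩
  rw [real_inner_comm, InnerProductSpace.toDual_symm_apply]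
  simp [hf i]

/-- Polytope form of Lemma 2, Case 2 (linear regression with interval outcome data):
the identified set is a polytope cut out by `2k` half spaces whose gradients come in
antipodal pairs `D_r = -z^r/σ_r`, `D_{k+r} = z^r/σ_{k+r}` (indexed here by
`Fin k ⊕ Fin k`), every subfamily of at most `d` of the `z^r` is linearly independent,
and each pair of parallel constraints bounds `z^r·θ` in a nondegenerate interval.
If the support set in direction `p` is not a singleton, then at every point `θ*` of its
relative interior: fewer than `d` constraints are active, the active gradients are
linearly independent (LICQ), and there is a direction `t` with `D_j·t < 0` for every
active `j` (MFCQ). -/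
theorem polytope_relint_LICQ_MFCQ
    (d k : ℕ) (hd : 1 ≤ d) (hk : d ≤ k)
    (z : Fin k → EuclideanSpace ℝ (Fin d))
    (hz : ∀ s : Finset (Fin k), s.card ≤ d →
      LinearIndependent ℝ (fun i : s => z i))
    (σlo σhi : Fin k → ℝ) (hσlo : ∀ r, 0 < σlo r) (hσhi : ∀ r, 0 < σhi r)
    (blo bhi : Fin k → ℝ) (hb : ∀ r, -(σlo r * blo r) < σhi r * bhi r)
    (D : Fin k ⊕ Fin k → EuclideanSpace ℝ (Fin d))
    (hD : D = Sum.elim (fun r => -((σlo r)⁻¹ • z r)) (fun r => (σhi r)⁻¹ • z r))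
    (b : Fin k ⊕ Fin k → ℝ) (hbdef : b = Sum.elim blo bhi)
    (Θ : Set (EuclideanSpace ℝ (Fin d)))
    (hcomp : IsCompact Θ) (hconv : Convex ℝ Θ) (hint : (interior Θ).Nonempty)
    (ΘI : Set (EuclideanSpace ℝ (Fin d)))
    (hΘI : ΘI = {θ ∈ Θ | ∀ j : Fin k ⊕ Fin k, ⟪D j, θ⟫ ≤ b j})
    (hne : ΘI.Nonempty) (hsub : ΘI ⊆ interior Θ)
    (p : EuclideanSpace ℝ (Fin d)) (hp : p ≠ 0)
    (Ssupp : Set (EuclideanSpace ℝ (Fin d)))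
    (hSsupp : Ssupp = {θ ∈ ΘI | ∀ θ' ∈ ΘI, ⟪p, θ'⟫ ≤ ⟪p, θ⟫})
    (hnotsingleton : ¬ ∃ θ0, Ssupp = {θ0}) :
    ∀ θs ∈ intrinsicInterior ℝ Ssupp,
      ({j : Fin k ⊕ Fin k | ⟪D j, θs⟫ = b j}).ncard < d ∧
      LinearIndependent ℝ (fun j : {j : Fin k ⊕ Fin k | ⟪D j, θs⟫ = b j} => D j) ∧
      ∃ t : EuclideanSpace ℝ (Fin d),
        ∀ j : Fin k ⊕ Fin k, ⟪D j, θs⟫ = b j → ⟪D j, t⟫ < 0 := by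
  classical
  intro θs hθs
  have hθsS : θs ∈ Ssupp := intrinsicInterior_subset hθs
  -- basic translations
  have hSsubI : Ssupp ⊆ ΘI := by
    rw [hSsupp]; exact fun x hx => hx.1
  have hIcon : ∀ θ ∈ ΘI, ∀ j, ⟪D j, θ⟫ ≤ b j := by
    intro θ hθ
    rw [hΘI] at hθ
    exact hθ.2
  -- a second point of the support set
  have hex : ∃ θ1 ∈ Ssupp, θ1 ≠ θs := by
    by_contra h
    push_neg at h
    exact hnotsingleton ⟨θs, Set.eq_singleton_iff_unique_mem.mpr ⟨hθsS, fun x hx => h x hx⟩⟩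
  obtain ⟨θ1, hθ1S, hθ1ne⟩ := hex
  set v : EuclideanSpace ℝ (Fin d) := θs - θ1 with hv
  have hvne : v ≠ 0 := sub_ne_zero.mpr (hθ1ne.symm)
  have hvnorm : 0 < ‖v‖ := norm_pos_iff.mpr hvne
  -- relative interior: extract a ball in the affine span
  obtain ⟨y, hy, hyθ⟩ := mem_intrinsicInterior.mp hθs
  obtain ⟨ε, hε, hball⟩ :=
    Metric.mem_nhds_iff.mp (mem_interior_iff_mem_nhds.mp hy)
  set δ : ℝ := ε / (2 * ‖v‖) with hδdef
  have hδ : 0 < δ := div_pos hε (by positivity)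
  -- the point θs + δ • v lies in the support set
  have hms : θs ∈ affineSpan ℝ Ssupp := mem_affineSpan ℝ hθsS
  have hm1 : θ1 ∈ affineSpan ℝ Ssupp := mem_affineSpan ℝ hθ1S
  have hmem2 : δ • v + θs ∈ affineSpan ℝ Ssupp := by
    have h := AffineSubspace.smul_vsub_vadd_mem (affineSpan ℝ Ssupp) δ hms hm1 hms
    simpa [vsub_eq_sub, vadd_eq_add, hv] using h
  have hθ2S : δ • v + θs ∈ Ssupp := by
    have hdist : dist (⟨δ • v + θs, hmem2⟩ : affineSpan ℝ Ssupp) y < ε := by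
      rw [Subtype.dist_eq, hyθ, dist_eq_norm]
      have h1 : δ • v + θs - θs = δ • v := by abel
      rw [h1, norm_smul, Real.norm_eq_abs, abs_of_pos hδ]
      have h2 : δ * ‖v‖ = ε / 2 := by
        rw [hδdef]; field_simp
      rw [h2]; linarith
    exact hball (Metric.mem_ball.mpr hdist)
  have hθ2I : δ • v + θs ∈ ΘI := hSsubI hθ2S
  have hθ1I : θ1 ∈ ΘI := hSsubI hθ1S
  -- active gradients are orthogonal to v
  have hortho : ∀ j, ⟪D j, θs⟫ = b j → ⟪D j, v⟫ = 0 := by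
    intro j hj
    have h2 : δ * ⟪D j, v⟫ + b j ≤ b j := by
      have := hIcon _ hθ2I j
      rwa [inner_add_right, real_inner_smul_right, hj] at this
    have h1 : b j - ⟪D j, v⟫ ≤ b j := by
      have h1eq : θ1 = θs - v := by rw [hv]; abel
      have := hIcon _ hθ1I j
      rwa [h1eq, inner_sub_right, hj] at this
    have hle0 : ⟪D j, v⟫ ≤ 0 := by
      by_contra hpos
      push_neg at hpos
      nlinarith
    have hge0 : 0 ≤ ⟪D j, v⟫ := by linarith
    linarith
  -- unfolding the gradients
  have hDl : ∀ (r : Fin k) (x : EuclideanSpace ℝ (Fin d)),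
      ⟪D (Sum.inl r), x⟫ = -((σlo r)⁻¹ * ⟪z r, x⟫) := by
    intro r x; rw [hD]
    simp only [Sum.elim_inl, inner_neg_left, real_inner_smul_left]
  have hDr : ∀ (r : Fin k) (x : EuclideanSpace ℝ (Fin d)),
      ⟪D (Sum.inr r), x⟫ = (σhi r)⁻¹ * ⟪z r, x⟫ := by
    intro r x; rw [hD]
    simp only [Sum.elim_inr, real_inner_smul_left]
  have hbl : ∀ r : Fin k, b (Sum.inl r) = blo r := by intro r; rw [hbdef]; rfl
  have hbr : ∀ r : Fin k, b (Sum.inr r) = bhi r := by intro r; rw [hbdef]; rfl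
  -- two antipodal constraints cannot both be active
  have hpair : ∀ r : Fin k, ⟪D (Sum.inl r), θs⟫ = b (Sum.inl r) →
      ⟪D (Sum.inr r), θs⟫ = b (Sum.inr r) → False := by
    intro r h1 h2
    rw [hDl, hbl] at h1
    rw [hDr, hbr] at h2
    have e1 : ⟪z r, θs⟫ = -(σlo r * blo r) := by
      have h := congrArg (fun t => σlo r * t) h1
      rw [mul_neg, ← mul_assoc, mul_inv_cancel₀ (hσlo r).ne', one_mul] at h
      linarith
    have e2 : ⟪z r, θs⟫ = σhi r * bhi r := by
      have h := congrArg (fun t => σhi r * t) h2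
      rw [← mul_assoc, mul_inv_cancel₀ (hσhi r).ne', one_mul] at h
      linarith
    have := hb r
    rw [← e1, ← e2] at this
    exact lt_irrefl _ this
  -- active z's are orthogonal to v
  have hzv : ∀ j, ⟪D j, θs⟫ = b j → ⟪z (Sum.elim id id j), v⟫ = 0 := by
    rintro (r | r) hj
    · have h0 := hortho _ hj
      rw [hDl] at h0
      have h0' : (σlo r)⁻¹ * ⟪z r, v⟫ = 0 := by linarith
      rcases mul_eq_zero.mp h0' with h | h
      · exact absurd h (inv_ne_zero (hσlo r).ne')
      · exact h
    · have h0 := hortho _ hj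
      rw [hDr] at h0
      rcases mul_eq_zero.mp h0 with h | h
      · exact absurd h (inv_ne_zero (hσhi r).ne')
      · exact h
  set J : Set (Fin k ⊕ Fin k) := {j : Fin k ⊕ Fin k | ⟪D j, θs⟫ = b j} with hJdef
  -- the projection to Fin k is injective on the active set
  have hinj : Set.InjOn (Sum.elim id id : Fin k ⊕ Fin k → Fin k) J := by
    intro j1 h1 j2 h2 he
    cases j1 with
    | inl r =>
      cases j2 with
      | inl r' =>
        simp only [Sum.elim_inl, id_eq] at he
        exact congrArg Sum.inl he
      | inr r' =>
        simp only [Sum.elim_inl, Sum.elim_inr, id_eq] at he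
        subst he
        exact (hpair r h1 h2).elim
    | inr r =>
      cases j2 with
      | inl r' =>
        simp only [Sum.elim_inl, Sum.elim_inr, id_eq] at he
        subst he
        exact (hpair r h2 h1).elim
      | inr r' =>
        simp only [Sum.elim_inr, id_eq] at he
        exact congrArg Sum.inr he
  have hfinJim : (Sum.elim id id '' J : Set (Fin k)).Finite := Set.toFinite _
  set T : Finset (Fin k) := hfinJim.toFinset with hTdef
  have hTcard : T.card = J.ncard := by
    rw [hTdef, ← Set.ncard_eq_toFinset_card _ hfinJim, Set.ncard_image_of_injOn hinj]
  have hTmem : ∀ i : Fin k, i ∈ T ↔ ∃ j ∈ J, Sum.elim id id j = i := by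
    intro i
    rw [hTdef, Set.Finite.mem_toFinset]
    exact Set.mem_image _ _ _
  -- v is orthogonal to z i for every i ∈ T
  have hvT : ∀ i ∈ T, ⟪z i, v⟫ = 0 := by
    intro i hi
    obtain ⟨j, hjJ, rfl⟩ := (hTmem i).mp hi
    exact hzv j hjJ
  -- cardinality bound
  have hcard : J.ncard < d := by
    by_contra hge
    push_neg at hge
    obtain ⟨S, hST, hScard⟩ :=
      Finset.exists_subset_card_eq (show d ≤ T.card by rw [hTcard]; exact hge)
    have hli := hz S (le_of_eq hScard)
    haveI : Nonempty S :=
      Finset.nonempty_coe_sort.mpr (Finset.card_pos.mp (by rw [hScard]; omega))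
    have hcardeq : Fintype.card S = Module.finrank ℝ (EuclideanSpace ℝ (Fin d)) := by
      rw [Fintype.card_coe, hScard, finrank_euclideanSpace_fin]
    have hspan : Submodule.span ℝ (Set.range fun i : S => z i) = ⊤ := by
      have hBspan := (basisOfLinearIndependentOfCardEqFinrank hli hcardeq).span_eq
      rwa [coe_basisOfLinearIndependentOfCardEqFinrank] at hBspan
    let f : EuclideanSpace ℝ (Fin d) →ₗ[ℝ] ℝ :=
      { toFun := fun u => ⟪u, v⟫
        map_add' := fun a c => inner_add_left a c v
        map_smul' := fun c a => by
          simp only [RingHom.id_apply, smul_eq_mul]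
          exact real_inner_smul_left a v c
      }
    have htop : (⊤ : Submodule ℝ (EuclideanSpace ℝ (Fin d))) ≤ LinearMap.ker f := by
      rw [← hspan]
      apply Submodule.span_le.mpr
      rintro _ ⟨i, rfl⟩
      exact LinearMap.mem_ker.mpr (hvT i (hST i.2))
    have hv0 : ⟪v, v⟫ = 0 := LinearMap.mem_ker.mp (htop Submodule.mem_top)
    exact hvne (inner_self_eq_zero.mp hv0)
  -- linear independence of the active gradients
  have hLI : LinearIndependent ℝ (fun j : J => D j) := by
    have hliT : LinearIndependent ℝ (fun i : T => z i) :=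
      hz T (by rw [hTcard]; exact hcard.le)
    have ginj : Function.Injective (fun j : J =>
        (⟨Sum.elim id id (j : Fin k ⊕ Fin k),
          (hTmem _).mpr ⟨(j : Fin k ⊕ Fin k), j.2, rfl⟩⟩ : T)) := by
      rintro ⟨j1, h1⟩ ⟨j2, h2⟩ he
      simp only [Subtype.mk.injEq] at he
      exact Subtype.ext (hinj h1 h2 he)
    have hliJz : LinearIndependent ℝ
        (fun j : J => z (Sum.elim id id (j : Fin k ⊕ Fin k))) := hliT.comp _ ginj
    set c : Fin k ⊕ Fin k → ℝ :=
      Sum.elim (fun r => -(σlo r)⁻¹) (fun r => (σhi r)⁻¹) with hcdef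
    have hc : ∀ j, c j ≠ 0 := by
      rintro (r | r)
      · exact neg_ne_zero.mpr (inv_ne_zero (hσlo r).ne')
      · exact inv_ne_zero (hσhi r).ne'
    have hDc : ∀ j, D j = c j • z (Sum.elim id id j) := by
      rintro (r | r) <;> rw [hD] <;> simp [hcdef, neg_smul]
    set u : J → ℝˣ := fun j => Units.mk0 (c (j : Fin k ⊕ Fin k)) (hc _) with hudef
    have heq : (fun j : J => D j) =
        (u • fun j : J => z (Sum.elim id id (j : Fin k ⊕ Fin k))) := by
      funext j
      rw [Pi.smul_apply', hDc]
      simp [hudef, Units.smul_def]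
    rw [heq]
    exact hliJz.units_smul u
  refine ⟨hcard, hLI, ?_⟩
  obtain ⟨t, ht⟩ := exists_inner_neg_aux (fun j : J => D j) hLI
  exact ⟨t, fun j hj => ht ⟨j, hj⟩⟩
end
end

section
/- (Entry game support point.) Let π₁₁, π₁₀, π₀₁ ∈ (0,1) with π₁₁ + π₁₀ + π₀₁ = 1. Define Θ_I = {(θ₁,θ₂) ∈ [0,1]² : (1−θ₁)(1−θ₂) = π₁₁, (1−θ₁)θ₂ ≤ π₁₀, θ₁(1−θ₂) ≤ π₀₁}. Then Θ_I is nonempty, and the maximum of θ₂ over Θ_I equals π₁₀/(π₁₀+π₁₁) and is attained at the unique point θ* = (π₀₁, π₁₀/(π₁₀+π₁₁)); that is, with p = (0,1), s(p,Θ_I) = π₁₀/(π₁₀+π₁₁) and S(p,Θ_I) = {(π₀₁, π₁₀/(π₁₀+π₁₁))}. Moreover, at θ* the equality constraint (1−θ₁)(1−θ₂) = π₁₁ and the inequality (1−θ₁)θ₂ ≤ π₁₀ are active while θ₁(1−θ₂) ≤ π₀₁ is slack (θ₁*(1−θ₂*) < π₀₁). -/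
noncomputable section

/-- The sharp identified set of the two-player entry game with `(ε₁, ε₂)` uniform on
`[0,1]²` and outcome probabilities `π₁₁, π₁₀, π₀₁` (with `π₀₀ = 0`). -/
def entryIdSet (π11 π10 π01 : ℝ) : Set (ℝ × ℝ) :=
  {θ | θ.1 ∈ Set.Icc (0:ℝ) 1 ∧ θ.2 ∈ Set.Icc (0:ℝ) 1 ∧
    (1 - θ.1) * (1 - θ.2) = π11 ∧ (1 - θ.1) * θ.2 ≤ π10 ∧ θ.1 * (1 - θ.2) ≤ π01}

/-- Entry game support point (Section 4.2): the identified set is nonempty, the maximum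
of `θ₂` over it equals `π₁₀/(π₁₀+π₁₁)` and is attained at the unique point
`θ* = (π₀₁, π₁₀/(π₁₀+π₁₁))`; moreover at `θ*` the equality constraint and the
inequality `(1-θ₁)θ₂ ≤ π₁₀` are active while `θ₁(1-θ₂) ≤ π₀₁` is slack. -/
theorem entry_game_support_point (π11 π10 π01 : ℝ)
    (h11 : π11 ∈ Set.Ioo (0:ℝ) 1) (h10 : π10 ∈ Set.Ioo (0:ℝ) 1)
    (h01 : π01 ∈ Set.Ioo (0:ℝ) 1) (hsum : π11 + π10 + π01 = 1) :
    (entryIdSet π11 π10 π01).Nonempty ∧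
    (π01, π10 / (π10 + π11)) ∈ entryIdSet π11 π10 π01 ∧
    (∀ θ ∈ entryIdSet π11 π10 π01, θ.2 ≤ π10 / (π10 + π11)) ∧
    {θ ∈ entryIdSet π11 π10 π01 | ∀ θ' ∈ entryIdSet π11 π10 π01, θ'.2 ≤ θ.2}
      = {(π01, π10 / (π10 + π11))} ∧
    (1 - π01) * (π10 / (π10 + π11)) = π10 ∧
    π01 * (1 - π10 / (π10 + π11)) < π01 := by
  obtain ⟨h11a, h11b⟩ := h11
  obtain ⟨h10a, h10b⟩ := h10
  obtain ⟨h01a, h01b⟩ := h01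
  have hs : (0:ℝ) < π10 + π11 := by linarith
  have hsne : π10 + π11 ≠ 0 := ne_of_gt hs
  have hq0 : 0 ≤ π10 / (π10 + π11) := by positivity
  have hq1 : π10 / (π10 + π11) ≤ 1 := by
    rw [div_le_one hs]; linarith
  have heq : (1 - π01) * (π10 / (π10 + π11)) = π10 := by
    field_simp; ring_nf; nlinarith
  have hmem : (π01, π10 / (π10 + π11)) ∈ entryIdSet π11 π10 π01 := by
    refine ⟨⟨le_of_lt h01a, le_of_lt h01b⟩, ⟨hq0, hq1⟩, ?_, le_of_eq heq, ?_⟩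
    · have : (1 - π10 / (π10 + π11)) = π11 / (π10 + π11) := by
        field_simp; ring
      rw [this, show (1:ℝ)-π01 = π10+π11 by linarith]
      rw [mul_div_assoc']
      rw [mul_comm, mul_div_assoc, div_self hsne, mul_one]
    · have : (1 - π10 / (π10 + π11)) = π11 / (π10 + π11) := by
        field_simp; ring
      rw [this]
      have : π01 * (π11 / (π10 + π11)) ≤ π01 * 1 := by
        apply mul_le_mul_of_nonneg_left _ (le_of_lt h01a)
        rw [div_le_one hs]; linarith
      linarith
  have hslack : π01 * (1 - π10 / (π10 + π11)) < π01 := by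
    have h1 : (1 - π10 / (π10 + π11)) = π11 / (π10 + π11) := by field_simp; ring
    rw [h1]
    have : π11 / (π10 + π11) < 1 := by rw [div_lt_one hs]; linarith
    nlinarith
  have hmax : ∀ θ ∈ entryIdSet π11 π10 π01, θ.2 ≤ π10 / (π10 + π11) := by
    rintro ⟨t1, t2⟩ ⟨⟨ht10, ht11⟩, ⟨ht20, ht21⟩, he, hle10, _⟩
    simp only at *
    rw [le_div_iff₀ hs]
    -- (1-t1)(1-t2)=π11, (1-t1)t2 ≤ π10 ⇒ t2(π10+π11) ≤ π10
    -- t2·π11 = t2(1-t1)(1-t2) ≤ π10(1-t2)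
    have h1 : 0 ≤ 1 - t2 := by linarith
    nlinarith [mul_le_mul_of_nonneg_right hle10 h1]
  refine ⟨⟨_, hmem⟩, hmem, hmax, ?_, heq, hslack⟩
  ext ⟨t1, t2⟩
  simp only [Set.mem_setOf_eq, Set.mem_singleton_iff, Prod.mk.injEq]
  constructor
  · rintro ⟨hm, hall⟩
    have h2 : t2 = π10 / (π10 + π11) := by
      have := hall _ hmem
      have := hmax _ hm
      simp only at *
      linarith
    obtain ⟨⟨ht10, ht11⟩, _, he, _, _⟩ := hm
    refine ⟨?_, h2⟩
    -- (1-t1)(1-π10/s) = π11 ⇒ (1-t1)·π11/s = π11 ⇒ 1-t1 = s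
    have h3 : (1 - π10 / (π10 + π11)) = π11 / (π10 + π11) := by field_simp; ring
    rw [h2, h3] at he
    have : (1 - t1) * π11 = π11 * (π10 + π11) := by
      field_simp at he; rw [he]; ring
    have h4 : 1 - t1 = π10 + π11 := by
      apply mul_left_cancel₀ (ne_of_gt h11a)
      rw [mul_comm π11 (1 - t1)]; exact this
    linarith
  · rintro ⟨h1, h2⟩
    subst h1; subst h2
    exact ⟨hmem, fun θ' hθ' => hmax θ' hθ'⟩
end
end
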